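/- Suppose ‖φ(x,a)‖₂ ≤ R for all (x,a) ∈ 𝒳×𝒜. For any θ, θ' ∈ ℝ^d and every state x, the Kullback–Leibler divergence between the corresponding softmax policies satisfies D_KL(π_θ(·|x) ‖ π_{θ'}(·|x)) ≤ R²‖θ − θ'‖₂²/2. -/

import Mathlib

noncomputable section
open MeasureTheory Finset Matrix
open scoped BigOperators ENNReal

namespace Paper

variable {X A : Type*}

/-- Euclidean dot product on `Fin d → ℝ`. -/
def dotp {d : ℕ} (u v : Fin d → ℝ) : ℝ := ∑ i, u i * v i

/-- Euclidean norm on `Fin d → ℝ`. -/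
def nrm2 {d : ℕ} (u : Fin d → ℝ) : ℝ := Real.sqrt (∑ i, (u i) ^ 2)

/-- Squared weighted norm `uᵀ M u`. -/
def wnormSq {d : ℕ} (M : Matrix (Fin d) (Fin d) ℝ) (u : Fin d → ℝ) : ℝ := dotp u (M.mulVec u)

/-- Kullback–Leibler divergence between finitely supported distributions. -/
def KLdiv [Fintype A] (p q : A → ℝ) : ℝ := ∑ a, p a * Real.log (p a / q a)

/-- A stochastic policy. -/
def IsPolicy [Fintype A] (π : X → A → ℝ) : Prop :=
  (∀ x a, 0 ≤ π x a) ∧ (∀ x, ∑ a, π x a = 1)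

/-- A probability distribution over a finite set. -/
def IsDist [Fintype X] (ν : X → ℝ) : Prop := (∀ x, 0 ≤ ν x) ∧ ∑ x, ν x = 1

/-- A transition kernel. -/
def IsKernel [Fintype X] (p : X → A → X → ℝ) : Prop :=
  (∀ x a x', 0 ≤ p x a x') ∧ (∀ x a, ∑ x', p x a x' = 1)

/-- The softmax policy associated with parameter vector `θ`. -/
def softmax [Fintype A] {d : ℕ} (φ : X → A → Fin d → ℝ) (θ : Fin d → ℝ) (x : X) (a : A) : ℝ :=
  Real.exp (dotp (φ x a) θ) / ∑ a', Real.exp (dotp (φ x a') θ)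

/-- State-action distribution at step `k` of the process started from `ν₀` and following `π`. -/
def trajDist [Fintype X] [Fintype A] (p : X → A → X → ℝ) (ν₀ : X → ℝ) (π : X → A → ℝ) :
    ℕ → X → A → ℝ
  | 0 => fun x a => ν₀ x * π x a
  | k + 1 => fun x a => (∑ x', ∑ a', trajDist p ν₀ π k x' a' * p x' a' x) * π x a

/-- Normalized discounted state-action occupancy measure of policy `π`. -/
def occupancy [Fintype X] [Fintype A] (γ : ℝ) (p : X → A → X → ℝ) (ν₀ : X → ℝ)
    (π : X → A → ℝ) (x : X) (a : A) : ℝ :=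
  (1 - γ) * ∑' k : ℕ, γ ^ k * trajDist p ν₀ π k x a

/-- `k`-step state transition kernel of the Markov chain induced by policy `π`. -/
def kernelPow [Fintype X] [Fintype A] [DecidableEq X] (p : X → A → X → ℝ) (π : X → A → ℝ) :
    ℕ → X → X → ℝ
  | 0 => fun x y => if x = y then 1 else 0
  | k + 1 => fun x y => ∑ z, kernelPow p π k x z * ∑ a, π z a * p z a y

/-- The value function of policy `π`. -/
def vval [Fintype X] [Fintype A] [DecidableEq X] (γ : ℝ) (r : X → A → ℝ) (p : X → A → X → ℝ)
    (π : X → A → ℝ) (x : X) : ℝ :=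
  ∑' k : ℕ, γ ^ k * ∑ y, kernelPow p π k x y * ∑ a, π y a * r y a

/-- The action-value function of policy `π`. -/
def qval [Fintype X] [Fintype A] [DecidableEq X] (γ : ℝ) (r : X → A → ℝ) (p : X → A → X → ℝ)
    (π : X → A → ℝ) (x : X) (a : A) : ℝ :=
  r x a + γ * ∑ x', p x a x' * vval γ r p π x'

/-- The normalized discounted return of policy `π`. -/
def ret [Fintype X] [Fintype A] (γ : ℝ) (p : X → A → X → ℝ) (ν₀ : X → ℝ) (r : X → A → ℝ)
    (π : X → A → ℝ) : ℝ := ∑ x, ∑ a, occupancy γ p ν₀ π x a * r x a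

/-- The parametrized value-function candidate `v_{θ,π}`. -/
def vparam [Fintype A] {d : ℕ} (φ : X → A → Fin d → ℝ) (θ : Fin d → ℝ) (π : X → A → ℝ)
    (x : X) : ℝ := ∑ a, π x a * dotp θ (φ x a)

/-- `Ψ v`, where `Ψ` is the matrix with columns `ψ x`. -/
def psiApply [Fintype X] {d : ℕ} (ψ : X → Fin d → ℝ) (v : X → ℝ) : Fin d → ℝ :=
  ∑ x, v x • ψ x

/-- `Φᵀ μ`, the feature occupancy of a state-action measure `μ`. -/
def featOcc [Fintype X] [Fintype A] {d : ℕ} (φ : X → A → Fin d → ℝ) (μ : X → A → ℝ) :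
    Fin d → ℝ := ∑ x, ∑ a, μ x a • φ x a

/-- The parametrized occupancy candidate `μ_{λ,π}` built from columns `ψh`. -/
def muOf [Fintype X] {d : ℕ} (γ : ℝ) (ν₀ : X → ℝ) (ψh : X → Fin d → ℝ) (lam : Fin d → ℝ)
    (π : X → A → ℝ) (x : X) (a : A) : ℝ :=
  π x a * ((1 - γ) * ν₀ x + γ * dotp (ψh x) lam)

/-- The reduced Lagrangian `f(λ, π; θ)`. -/
def lag [Fintype X] [Fintype A] {d : ℕ} (γ : ℝ) (ν₀ : X → ℝ) (omg : Fin d → ℝ)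
    (ψ : X → Fin d → ℝ) (φ : X → A → Fin d → ℝ) (lam θv : Fin d → ℝ) (π : X → A → ℝ) : ℝ :=
  (1 - γ) * ∑ x, ν₀ x * vparam φ θv π x
    + dotp lam (omg + γ • psiApply ψ (vparam φ θv π) - θv)

/-- The regularized empirical covariance matrix `Λ̂`. -/
def covMat {d n : ℕ} (β : ℝ) (φi : Fin n → Fin d → ℝ) : Matrix (Fin d) (Fin d) ℝ :=
  β • (1 : Matrix (Fin d) (Fin d) ℝ) + (n : ℝ)⁻¹ • ∑ i, vecMulVec (φi i) (φi i)

/-- `Ψ̂ v`, where `Ψ̂` is the least-squares estimator of `Ψ`. -/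
def psiHatApply {X : Type*} {d n : ℕ} (β : ℝ) (φi : Fin n → Fin d → ℝ)
    (xs : Fin n → X) (v : X → ℝ) : Fin d → ℝ :=
  (covMat β φi)⁻¹.mulVec ((n : ℝ)⁻¹ • ∑ i, v (xs i) • φi i)

/-- `ψ̂ x`, the column of the least-squares estimator `Ψ̂` at state `x`. -/
def psiHatCol {X : Type*} [DecidableEq X] {d n : ℕ} (β : ℝ) (φi : Fin n → Fin d → ℝ)
    (xs : Fin n → X) (x : X) : Fin d → ℝ :=
  (covMat β φi)⁻¹.mulVec ((n : ℝ)⁻¹ • ∑ i, (if xs i = x then (1 : ℝ) else 0) • φi i)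

/-! The KL divergence between the Gibbs distributions `p ∝ exp s` and `q ∝ exp s'` is
`log 𝔼_p exp (w - 𝔼_p w)` with `w = s' - s`: the cumulant generating function at `1` of the
centred score difference. For softmax policies `w a = ⟨φ(x,a), θ' - θ⟩` lies in `[-M, M]` with
`M = R ‖θ - θ'‖` by Cauchy–Schwarz, so Hoeffding's lemma bounds it by `(2M)² / 8 = M² / 2`. -/

open ProbabilityTheory Real

theorem dotp_eq_inner {d : ℕ} (u v : Fin d → ℝ) :
    dotp u v = inner ℝ (WithLp.toLp 2 u) (WithLp.toLp 2 v) := by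
  simp only [dotp, EuclideanSpace.inner_toLp_toLp, dotProduct, star_trivial, mul_comm]

theorem nrm2_eq_norm {d : ℕ} (u : Fin d → ℝ) : nrm2 u = ‖WithLp.toLp 2 u‖ := by
  simp [nrm2, EuclideanSpace.norm_eq]

theorem abs_dotp_le {d : ℕ} (u v : Fin d → ℝ) : |dotp u v| ≤ nrm2 u * nrm2 v := by
  simpa only [dotp_eq_inner, nrm2_eq_norm] using abs_real_inner_le_norm _ _

theorem nrm2_sub_comm {d : ℕ} (u v : Fin d → ℝ) : nrm2 (u - v) = nrm2 (v - u) := by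
  simp only [nrm2_eq_norm, WithLp.toLp_sub, norm_sub_rev]

theorem dotp_sub {d : ℕ} (u v w : Fin d → ℝ) : dotp u (v - w) = dotp u v - dotp u w := by
  simp only [dotp, Pi.sub_apply, mul_sub, sum_sub_distrib]

theorem log_sum_mul_exp_sub_mean_le {ι : Type*} [Fintype ι] {p v : ι → ℝ} (hp : ∀ i, 0 ≤ p i)
    (hp1 : ∑ i, p i = 1) {a b : ℝ} (hv : ∀ i, v i ∈ Set.Icc a b) :
    log (∑ i, p i * exp (v i - ∑ j, p j * v j)) ≤ (b - a) ^ 2 / 8 := by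
  let _ : MeasurableSpace ι := ⊤
  have hsum : ∑ i, ENNReal.ofReal (p i) = 1 := by
    rw [← ENNReal.ofReal_sum_of_nonneg fun i _ => hp i, hp1, ENNReal.ofReal_one]
  set P := PMF.ofFintype _ hsum
  have hint (f : ι → ℝ) : ∫ i, f i ∂P.toMeasure = ∑ i, p i * f i := by
    simp [P, PMF.integral_eq_sum, ENNReal.toReal_ofReal (hp _)]
  have hoeffding := (hasSubgaussianMGF_of_mem_Icc (μ := P.toMeasure) (X := v)
    measurable_from_top.aemeasurable (ae_of_all _ hv)).cgf_le 1
  simp only [cgf, mgf, hint, one_mul, one_pow, mul_one] at hoeffding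
  convert hoeffding using 1
  simp only [NNReal.coe_pow, NNReal.coe_div, coe_nnnorm, Real.norm_eq_abs, NNReal.coe_ofNat]
  rw [div_pow, sq_abs]
  ring

section Gibbs

variable [Fintype A]

def gibbs (s : A → ℝ) (a : A) : ℝ := exp (s a) / ∑ b, exp (s b)

theorem sum_gibbs_mul_exp_sub (s s' : A → ℝ) :
    ∑ a, gibbs s a * exp (s' a - s a) = (∑ b, exp (s' b)) / ∑ b, exp (s b) := by
  simp only [gibbs, div_mul_eq_mul_div, ← exp_add, add_sub_cancel, ← sum_div]

variable [Nonempty A] (s s' : A → ℝ)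

theorem sum_exp_pos : 0 < ∑ b, exp (s b) := sum_pos (fun _ _ => exp_pos _) univ_nonempty

theorem gibbs_pos (a : A) : 0 < gibbs s a := div_pos (exp_pos _) (sum_exp_pos s)

theorem sum_gibbs : ∑ a, gibbs s a = 1 := by
  simp only [gibbs, ← sum_div, div_self (sum_exp_pos s).ne']

theorem gibbs_div_gibbs (a : A) :
    gibbs s a / gibbs s' a = exp (s a - s' a) * ((∑ b, exp (s' b)) / ∑ b, exp (s b)) := by
  have := sum_exp_pos s
  have := sum_exp_pos s'
  simp only [gibbs, exp_sub]
  field_simp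

theorem KLdiv_gibbs :
    KLdiv (gibbs s) (gibbs s') =
      log (∑ a, gibbs s a * exp ((s' a - s a) - ∑ b, gibbs s b * (s' b - s b))) := by
  have hratio := div_pos (sum_exp_pos s') (sum_exp_pos s)
  simp only [exp_sub _ (∑ b, _), ← mul_div_assoc, ← sum_div, sum_gibbs_mul_exp_sub,
    log_div hratio.ne' (exp_pos _).ne', log_exp]
  simp only [KLdiv, gibbs_div_gibbs, log_mul (exp_pos _).ne' hratio.ne', log_exp, mul_add,
    sum_add_distrib, ← sum_mul, sum_gibbs, one_mul]
  simp only [← neg_sub (s' _) (s _), mul_neg, sum_neg_distrib]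
  ring

end Gibbs

theorem statement16_general {X A : Type*} [Fintype A] [Nonempty A] {d : ℕ} (R : ℝ)
    (φ : X → A → Fin d → ℝ) (hφ : ∀ x a, nrm2 (φ x a) ≤ R)
    (θ θ' : Fin d → ℝ) (x : X) :
    KLdiv (softmax φ θ x) (softmax φ θ' x) ≤ R ^ 2 * nrm2 (θ - θ') ^ 2 / 2 := by
  set M := R * nrm2 (θ - θ') with hM
  have hscore (a : A) : dotp (φ x a) θ' - dotp (φ x a) θ ∈ Set.Icc (-M) M := by
    rw [← dotp_sub, Set.mem_Icc, ← abs_le, hM, nrm2_sub_comm θ θ']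
    exact (abs_dotp_le _ _).trans (mul_le_mul_of_nonneg_right (hφ x a) (sqrt_nonneg _))
  calc KLdiv (softmax φ θ x) (softmax φ θ' x)
      = log (∑ a, softmax φ θ x a * exp ((dotp (φ x a) θ' - dotp (φ x a) θ)
          - ∑ b, softmax φ θ x b * (dotp (φ x b) θ' - dotp (φ x b) θ))) :=
        KLdiv_gibbs (fun a => dotp (φ x a) θ) (fun a => dotp (φ x a) θ')
    _ ≤ (M - -M) ^ 2 / 8 :=
        log_sum_mul_exp_sub_mean_le (fun a => (gibbs_pos _ a).le) (sum_gibbs _) hscore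
    _ = R ^ 2 * nrm2 (θ - θ') ^ 2 / 2 := by ring

/-- KL smoothness of softmax policies:
`D_KL(π_θ(·|x) ‖ π_θ'(·|x)) ≤ R²‖θ − θ'‖₂²/2`. -/
theorem statement16 {X A : Type*} [Fintype X] [Fintype A] [Nonempty A] {d : ℕ} (R : ℝ)
    (φ : X → A → Fin d → ℝ) (hφ : ∀ x a, nrm2 (φ x a) ≤ R)
    (θ θ' : Fin d → ℝ) (x : X) :
    KLdiv (softmax φ θ x) (softmax φ θ' x) ≤ R ^ 2 * nrm2 (θ - θ') ^ 2 / 2 :=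
  statement16_general R φ hφ θ θ' x

end Paper
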